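/- Let G be a finite simple graph in which every induced neighborhood is a cycle graph. Then Σ_{p∈V} (1 - deg(p)/6) = χ(G) = v_0 - v_1 + v_2. -/

import Mathlib

/-!
Triangles through a vertex `p` correspond to edges of its neighborhood graph; when that graph is
a cycle on `deg p` vertices it has `deg p` edges, so `p` lies in exactly `deg p` triangles.
Counting vertex–triangle incidences then gives `Σ deg = 3 v₂`, the handshake lemma gives
`Σ deg = 2 v₁`, and `Σ deg / 6 = Σ deg / 2 - Σ deg / 3 = v₁ - v₂`.
-/

open Finset SimpleGraph

/-- The induced subgraph on the neighborhood of `p` is a cycle graph `C_k` for some `k ≥ 3`. -/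
def NeighborhoodIsCycle {V : Type*} (G : SimpleGraph V) (p : V) : Prop :=
  ∃ k, 3 ≤ k ∧ Nonempty ((G.induce (G.neighborSet p)) ≃g SimpleGraph.cycleGraph k)

theorem Finset.sum_card_filter_mem {α : Type*} [Fintype α] [DecidableEq α]
    (B : Finset (Finset α)) : ∑ a, #{b ∈ B | a ∈ b} = ∑ b ∈ B, #b := by
  simp only [card_filter]
  rw [sum_comm]
  simp

namespace SimpleGraph

theorem card_edgeFinset_cycleGraph {n : ℕ} (hn : 3 ≤ n) : #(cycleGraph n).edgeFinset = n := by
  obtain ⟨m, rfl⟩ := Nat.exists_eq_add_of_le' hn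
  have := (cycleGraph (m + 3)).sum_degrees_eq_twice_card_edges
  simp only [cycleGraph_degree_three_le, sum_const, card_univ, Fintype.card_fin,
    smul_eq_mul] at this
  omega

variable {V : Type*} [Fintype V] [DecidableEq V] (G : SimpleGraph V) [DecidableRel G.Adj]

theorem card_filter_mem_cliqueFinset_three (p : V) :
    #{t ∈ G.cliqueFinset 3 | p ∈ t} = #(G.induce (G.neighborSet p)).edgeFinset := by
  symm
  refine card_bij (fun e _ ↦ insert p (e.toFinset.map (Function.Embedding.subtype _))) ?_ ?_ ?_
  · intro e he
    induction e using Sym2.ind with | _ a b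
    rw [mem_edgeFinset, mem_edgeSet, comap_adj] at he
    simp only [mem_filter, mem_cliqueFinset_iff, Sym2.toFinset_mk_eq, map_insert, map_singleton,
      mem_insert_self, and_true]
    exact is3Clique_triple_iff.2 ⟨a.2, b.2, he⟩
  · intro e _ e' _ hee'
    ext x
    have hpx : G.Adj p x := x.2
    simpa [hpx.ne', hpx] using congrArg ((x : V) ∈ ·) hee'
  · intro t ht
    rw [mem_filter, mem_cliqueFinset_iff] at ht
    obtain ⟨htri, hpt⟩ := ht
    obtain ⟨a, b, hab, hpab⟩ := card_eq_two.1 (show #(t.erase p) = 2 by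
      rw [card_erase_of_mem hpt, htri.card_eq])
    have ha : a ∈ t.erase p := hpab ▸ mem_insert_self a _
    have hb : b ∈ t.erase p := hpab ▸ mem_insert_of_mem (mem_singleton_self b)
    have hpa := htri.1 hpt (mem_of_mem_erase ha) (ne_of_mem_erase ha).symm
    have hpb := htri.1 hpt (mem_of_mem_erase hb) (ne_of_mem_erase hb).symm
    refine ⟨s(⟨a, hpa⟩, ⟨b, hpb⟩),
      mem_edgeFinset.2 (htri.1 (mem_of_mem_erase ha) (mem_of_mem_erase hb) hab), ?_⟩
    simp [Sym2.toFinset_mk_eq, ← hpab, insert_erase hpt]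

theorem card_filter_mem_cliqueFinset_three_of_neighborhoodIsCycle {p : V}
    (hp : NeighborhoodIsCycle G p) : #{t ∈ G.cliqueFinset 3 | p ∈ t} = G.degree p := by
  obtain ⟨k, hk, ⟨e⟩⟩ := hp
  rw [card_filter_mem_cliqueFinset_three, e.card_edgeFinset_eq, card_edgeFinset_cycleGraph hk,
    ← card_neighborSet_eq_degree, Fintype.card_congr e.toEquiv, Fintype.card_fin]

theorem sum_degree_eq_three_mul_card_cliqueFinset_three (h : ∀ p, NeighborhoodIsCycle G p) :
    ∑ p, G.degree p = 3 * #(G.cliqueFinset 3) := by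
  calc ∑ p, G.degree p
      = ∑ p, #{t ∈ G.cliqueFinset 3 | p ∈ t} := by
        simp only [card_filter_mem_cliqueFinset_three_of_neighborhoodIsCycle G (h _)]
    _ = ∑ t ∈ G.cliqueFinset 3, #t := sum_card_filter_mem _
    _ = 3 * #(G.cliqueFinset 3) := by
        rw [sum_congr rfl fun t ht ↦ (mem_cliqueFinset_iff.1 ht).card_eq, sum_const, smul_eq_mul,
          mul_comm]

end SimpleGraph

/-- Gauss-Bonnet for two-dimensional graphs: if every induced neighborhood is a cycle, then
`Σ_p (1 - deg(p)/6) = χ(G) = v_0 - v_1 + v_2` (vertices minus edges plus triangles). -/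
theorem gaussBonnet_twoDimensional {V : Type*} [Fintype V] [DecidableEq V]
    (G : SimpleGraph V) [DecidableRel G.Adj]
    (h : ∀ p : V, NeighborhoodIsCycle G p) :
    ∑ p : V, (1 - (G.degree p : ℚ) / 6)
      = (Fintype.card V : ℚ) - G.edgeFinset.card + (G.cliqueFinset 3).card := by
  have hEdges : ((∑ p, G.degree p : ℕ) : ℚ) = 2 * #G.edgeFinset := by
    exact_mod_cast G.sum_degrees_eq_twice_card_edges
  have hTriangles : ((∑ p, G.degree p : ℕ) : ℚ) = 3 * #(G.cliqueFinset 3) := by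
    exact_mod_cast G.sum_degree_eq_three_mul_card_cliqueFinset_three h
  rw [sum_sub_distrib, ← sum_div, sum_const, card_univ, nsmul_one]
  push_cast at hEdges hTriangles
  linarith
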